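/- If the graph Ĝ_{f,B} (using δ̂(a,a') = inf { v(a)−v(a') : f(v,B)=a over all B } in place of δ) contains no negative cycle, then f : V × B → A with fully private budgets (arbitrary budget reports allowed) is implementable. -/

import Mathlib

noncomputable section

open scoped Classical

variable {A : Type*} {N : Type*}

/-- minimum reported budget required to obtain outcome `a` -/
def beta (V : Set (A → ℝ)) (Bud : Set EReal) (f : (A → ℝ) → EReal → A) (a : A) : EReal :=
  sInf {B | B ∈ Bud ∧ ∃ v ∈ V, f v B = a}

/-- minimum reported value required to obtain outcome `a` -/
def omegaV (V : Set (A → ℝ)) (Bud : Set EReal) (f : (A → ℝ) → EReal → A) (a : A) : EReal :=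
  sInf {x : EReal | ∃ v ∈ V, ∃ B ∈ Bud, f v B = a ∧ x = ((v a : ℝ) : EReal)}

def theta (V : Set (A → ℝ)) (Bud : Set EReal) (f : (A → ℝ) → EReal → A) (a : A) : EReal :=
  min (beta V Bud f a) (omegaV V Bud f a)

def delta (V : Set (A → ℝ)) (Bud : Set EReal) (f : (A → ℝ) → EReal → A) (a a' : A) : EReal :=
  sInf {x : EReal | ∃ v ∈ V, ∃ B ∈ Bud, beta V Bud f a' ≤ B ∧ f v B = a ∧
    x = ((v a - v a' : ℝ) : EReal)}

def deltaHat (V : Set (A → ℝ)) (Bud : Set EReal) (f : (A → ℝ) → EReal → A) (a a' : A) : EReal :=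
  sInf {x : EReal | ∃ v ∈ V, ∃ B ∈ Bud, f v B = a ∧ x = ((v a - v a' : ℝ) : EReal)}

/-- arc length of the graph `G_{f,B}` -/
def glen (V : Set (A → ℝ)) (Bud : Set EReal) (f : (A → ℝ) → EReal → A) (a a' : A) : EReal :=
  min (delta V Bud f a a') (theta V Bud f a)

/-- arc length of the graph `Ĝ_{f,B}` -/
def glenHat (V : Set (A → ℝ)) (Bud : Set EReal) (f : (A → ℝ) → EReal → A) (a a' : A) : EReal :=
  min (deltaHat V Bud f a a') (theta V Bud f a)

/-- length of the closed walk through the nodes of the list `c` -/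
def cycLen (l : N → N → EReal) (c : List N) : EReal :=
  ((c.zip (c.rotate 1)).map fun pr => l pr.1 pr.2).sum

def NoNegCycle (l : N → N → EReal) : Prop :=
  ∀ c : List N, c ≠ [] → 0 ≤ cycLen l c

def pathLen (l : N → N → EReal) : List N → EReal
  | [] => 0
  | [_] => 0
  | x :: y :: t => l x y + pathLen l (y :: t)

/-- shortest-path distance from `i` to `k` in the complete graph with lengths `l` -/
def distG (l : N → N → EReal) (i k : N) : EReal :=
  sInf (pathLen l '' {c : List N | c.head? = some i ∧ c.getLast? = some k})

def Onto (V : Set (A → ℝ)) (Bud : Set EReal) (f : (A → ℝ) → EReal → A) : Prop :=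
  ∀ a : A, ∃ v ∈ V, ∃ B ∈ Bud, f v B = a

def NonnegV (V : Set (A → ℝ)) : Prop := ∀ v ∈ V, ∀ a, 0 ≤ v a

def NonnegB (Bud : Set EReal) : Prop := ∀ B ∈ Bud, 0 ≤ B

/-- `p` gives per-outcome prices implementing `f` : full incentive compatibility
(arbitrary misreports of value and budget), IR, BF and NPT. -/
def Implements (V : Set (A → ℝ)) (Bud : Set EReal) (f : (A → ℝ) → EReal → A)
    (p : A → ℝ) : Prop :=
  (∀ v ∈ V, ∀ B ∈ Bud, ∀ v' ∈ V, ∀ B' ∈ Bud,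
      ((p (f v' B') : ℝ) : EReal) ≤ B →
      v (f v' B') - p (f v' B') ≤ v (f v B) - p (f v B)) ∧
  (∀ v ∈ V, ∀ B ∈ Bud, p (f v B) ≤ v (f v B)) ∧
  (∀ v ∈ V, ∀ B ∈ Bud, ((p (f v B) : ℝ) : EReal) ≤ B) ∧
  (∀ v ∈ V, ∀ B ∈ Bud, 0 ≤ p (f v B))

/-- as `Implements`, but budget over-reporting is impossible: `B' ≤ B`. -/
def ImplementsNoOver (V : Set (A → ℝ)) (Bud : Set EReal) (f : (A → ℝ) → EReal → A)
    (p : A → ℝ) : Prop :=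
  (∀ v ∈ V, ∀ B ∈ Bud, ∀ v' ∈ V, ∀ B' ∈ Bud, B' ≤ B →
      ((p (f v' B') : ℝ) : EReal) ≤ B →
      v (f v' B') - p (f v' B') ≤ v (f v B) - p (f v B)) ∧
  (∀ v ∈ V, ∀ B ∈ Bud, p (f v B) ≤ v (f v B)) ∧
  (∀ v ∈ V, ∀ B ∈ Bud, ((p (f v B) : ℝ) : EReal) ≤ B) ∧
  (∀ v ∈ V, ∀ B ∈ Bud, 0 ≤ p (f v B))

/-- arcs of the augmented graph `H` : `none` is the special node `0`. -/
def HArc (d : A → A → EReal) : Option A → Option A → Prop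
  | some i, some k => d i k < ⊤
  | none, some _ => True
  | some _, none => True
  | none, none => False

/-- arc lengths of the augmented graph `H`. -/
def HLen (d : A → A → EReal) (t : A → EReal) : Option A → Option A → EReal
  | some i, some k => d i k
  | none, some _ => 0
  | some i, none => t i
  | none, none => 0

def NoNegCycleH (d : A → A → EReal) (t : A → EReal) : Prop :=
  ∀ c : List (Option A), c ≠ [] →
    (∀ pr ∈ c.zip (c.rotate 1), HArc d pr.1 pr.2) →
    0 ≤ cycLen (HLen d t) c

/-- shortest-path distance from node `i` to the special node `0` in `H`. -/
def distH (d : A → A → EReal) (t : A → EReal) (i : A) : EReal :=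
  sInf (pathLen (HLen d t) ''
    {c : List (Option A) | c.head? = some (some i) ∧ c.getLast? = some none ∧
      ∀ pr ∈ c.zip c.tail, HArc d pr.1 pr.2})

/-! The prices are shortest-path distances to a virtual sink in `Ĝ_{f,B}`: from outcome `a` one
walks along `δ̂`-arcs and leaves through a `θ`-arc.  Such a potential satisfies the triangle
inequality `p a ≤ δ̂ a a' + p a'`, which is incentive compatibility, and `p ≤ θ`, which gives
individual rationality and budget feasibility; the absence of negative cycles, closing each walk
with the arc `a_last → a` (of length at most `θ a_last`), makes it nonnegative. -/

section ShortestPath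

variable {l d : N → N → EReal} {t : N → EReal}

lemma pathLen_cons_cons (l : N → N → EReal) (x y : N) (w : List N) :
    pathLen l (x :: y :: w) = l x y + pathLen l (y :: w) := rfl

lemma pathLen_mono (h : ∀ i k, l i k ≤ d i k) : ∀ c : List N, pathLen l c ≤ pathLen d c
  | [] | [_] => le_rfl
  | x :: y :: w => add_le_add (h x y) (pathLen_mono h (y :: w))

lemma sum_map_zip_append_singleton (l : N → N → EReal) :
    ∀ (w : List N) (a z : N),
      (((a :: w).zip (w ++ [z])).map fun pr => l pr.1 pr.2).sum
        = pathLen l (a :: w) + l (w.getLastD a) z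
  | [], a, z => by simp [pathLen]
  | b :: w, a, z => by
      simp only [List.cons_append, List.zip_cons_cons, List.map_cons, List.sum_cons]
      rw [sum_map_zip_append_singleton l w b z, pathLen_cons_cons, List.getLastD_cons, add_assoc]

lemma cycLen_cons (l : N → N → EReal) (a : N) (w : List N) :
    cycLen l (a :: w) = pathLen l (a :: w) + l (w.getLastD a) a := by
  rw [cycLen, List.rotate_cons_succ, List.rotate_zero, sum_map_zip_append_singleton]

lemma NoNegCycle.ne_bot (hl : NoNegCycle l) (a b : N) : l a b ≠ ⊥ := by
  intro h
  have := hl [a, b] (List.cons_ne_nil _ _)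
  rw [cycLen_cons, pathLen_cons_cons, h, EReal.bot_add, EReal.bot_add] at this
  simp at this

def sinkDist (d : N → N → EReal) (t : N → EReal) (a : N) : EReal :=
  ⨅ w : List N, pathLen d (a :: w) + t (w.getLastD a)

lemma sinkDist_le_terminal (a : N) : sinkDist d t a ≤ t a :=
  iInf_le_of_le [] (by simp [pathLen])

lemma sinkDist_le_add {a b : N} (hbot : d a b ≠ ⊥) (htop : d a b ≠ ⊤) :
    sinkDist d t a ≤ d a b + sinkDist d t b := by
  obtain ⟨r, hr⟩ : ∃ r : ℝ, d a b = r := ⟨_, (EReal.coe_toReal htop hbot).symm⟩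
  have hr' : (r : EReal) ≠ ⊥ ∧ (r : EReal) ≠ ⊤ := ⟨EReal.coe_ne_bot r, EReal.coe_ne_top r⟩
  rw [hr, add_comm, ← EReal.sub_le_iff_le_add (.inl hr'.1) (.inl hr'.2)]
  refine le_iInf fun w => ?_
  rw [EReal.sub_le_iff_le_add (.inl hr'.1) (.inl hr'.2)]
  calc sinkDist d t a ≤ pathLen d (a :: b :: w) + t ((b :: w).getLastD a) := iInf_le _ (b :: w)
    _ = _ := by rw [pathLen_cons_cons, List.getLastD_cons, hr, add_assoc, add_comm]

lemma sinkDist_nonneg (hl : NoNegCycle l) (hd : ∀ i k, l i k ≤ d i k) (ht : ∀ i k, l i k ≤ t i)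
    (a : N) : 0 ≤ sinkDist d t a :=
  le_iInf fun w => by
    have := hl (a :: w) (List.cons_ne_nil _ _)
    rw [cycLen_cons] at this
    exact this.trans (add_le_add (pathLen_mono hd _) (ht _ _))

end ShortestPath

section Mechanism

variable {V : Set (A → ℝ)} {Bud : Set EReal} {f : (A → ℝ) → EReal → A}
  {v : A → ℝ} {B : EReal}

lemma deltaHat_le_sub (hv : v ∈ V) (hB : B ∈ Bud) (a' : A) :
    deltaHat V Bud f (f v B) a' ≤ ((v (f v B) - v a' : ℝ) : EReal) :=
  sInf_le ⟨v, hv, B, hB, rfl, rfl⟩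

lemma theta_le_budget (hv : v ∈ V) (hB : B ∈ Bud) : theta V Bud f (f v B) ≤ B :=
  (min_le_left _ _).trans (sInf_le ⟨hB, v, hv, rfl⟩)

lemma theta_le_value (hv : v ∈ V) (hB : B ∈ Bud) :
    theta V Bud f (f v B) ≤ ((v (f v B) : ℝ) : EReal) :=
  (min_le_right _ _).trans (sInf_le ⟨v, hv, B, hB, rfl, rfl⟩)

lemma theta_lt_top (honto : Onto V Bud f) (a : A) : theta V Bud f a < ⊤ := by
  obtain ⟨v, hv, B, hB, rfl⟩ := honto a
  exact (theta_le_value hv hB).trans_lt (EReal.coe_lt_top _)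

lemma deltaHat_lt_top (honto : Onto V Bud f) (a a' : A) : deltaHat V Bud f a a' < ⊤ := by
  obtain ⟨v, hv, B, hB, rfl⟩ := honto a
  exact (deltaHat_le_sub hv hB a').trans_lt (EReal.coe_lt_top _)

lemma implements_of_potential {p : A → ℝ} (hp0 : ∀ a, 0 ≤ p a)
    (hpθ : ∀ a, (p a : EReal) ≤ theta V Bud f a)
    (hpδ : ∀ a a', (p a : EReal) ≤ deltaHat V Bud f a a' + p a') :
    Implements V Bud f p := by
  refine ⟨fun v hv B hB v' _ B' _ _ => ?_, fun v hv B hB => ?_, fun v hv B hB => ?_,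
    fun _ _ _ _ => hp0 _⟩
  · have := (hpδ (f v B) (f v' B')).trans (add_le_add_left (deltaHat_le_sub hv hB _) _)
    rw [← EReal.coe_add, EReal.coe_le_coe_iff] at this
    linarith
  · exact_mod_cast (hpθ _).trans (theta_le_value hv hB)
  · exact (hpθ _).trans (theta_le_budget hv hB)

end Mechanism

theorem stmt9_general {A : Type*} (V : Set (A → ℝ)) (Bud : Set EReal)
    (f : (A → ℝ) → EReal → A)
    (honto : Onto V Bud f)
    (hG : NoNegCycle (glenHat V Bud f)) :
    ∃ p : A → ℝ, Implements V Bud f p := by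
  set q := sinkDist (deltaHat V Bud f) (theta V Bud f)
  have hq0 : ∀ a, 0 ≤ q a :=
    sinkDist_nonneg hG (fun _ _ => min_le_left _ _) (fun _ _ => min_le_right _ _)
  have hqθ : ∀ a, q a ≤ theta V Bud f a := sinkDist_le_terminal
  have hq : ∀ a, ((q a).toReal : EReal) = q a := fun a =>
    EReal.coe_toReal ((hqθ a).trans_lt (theta_lt_top honto a)).ne
      (ne_bot_of_le_ne_bot EReal.zero_ne_bot (hq0 a))
  refine ⟨fun a => (q a).toReal,
    implements_of_potential (fun a => EReal.toReal_nonneg (hq0 a)) (fun a => ?_) fun a a' => ?_⟩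
  · rw [hq]; exact hqθ a
  · rw [hq, hq]
    exact sinkDist_le_add (ne_bot_of_le_ne_bot (hG.ne_bot a a') (min_le_left _ _))
      (deltaHat_lt_top honto a a').ne

/-- sufficiency for fully private budgets. If the graph `Ĝ_{f,B}`
(with `δ̂` in place of `δ`) contains no negative cycle, then `f` is implementable. -/
theorem stmt9 {A : Type*} (V : Set (A → ℝ)) (Bud : Set EReal)
    (f : (A → ℝ) → EReal → A)
    (hV : NonnegV V) (hB : NonnegB Bud) (honto : Onto V Bud f)
    (hG : NoNegCycle (glenHat V Bud f)) :
    ∃ p : A → ℝ, Implements V Bud f p :=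
  stmt9_general V Bud f honto hG
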